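/- Let X be a standard Borel space, Y a countably separated measurable space, and f : X → Y a surjective Borel map. Then f admits an absolutely measurable cross section, i.e., a function g : Y → X with f ∘ g = id_Y such that g⁻¹(E) is absolutely measurable in Y for every Borel set E ⊆ X. -/

import Mathlib

/-!
Encode `Y` in Cantor space by a measurable injection `i`, refine the Polish topology of `X` so
that `i ∘ f` becomes continuous, and compose with a continuous surjection `φ` of Baire space onto
`X`: this gives a continuous `π : (ℕ → ℕ) → (ℕ → Bool)` with range `i(Y)`. Sending `c` to the
lexicographically least point of the closed fibre `π⁻¹{c}` is measurable for the σ-algebra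
generated by analytic sets, because each digit is decided by which of the analytic sets
`π(cylinder)` contain `c`. Analytic sets are absolutely measurable (they are approximated from
inside by compact sets), and absolute measurability pulls back along measurable maps, so
`g y = φ (lexMin (π⁻¹{i y}))` is the required section.
-/

open MeasureTheory

/-- A subset `A` of a measurable space is absolutely measurable if for every finite positive
measure `μ` there are measurable sets `E ⊆ A ⊆ F` with `μ (F \ E) = 0`. -/
def AbsolutelyMeasurable {Y : Type*} [MeasurableSpace Y] (A : Set Y) : Prop :=
  ∀ μ : Measure Y, IsFiniteMeasure μ →
    ∃ E F : Set Y, MeasurableSet E ∧ MeasurableSet F ∧ E ⊆ A ∧ A ⊆ F ∧ μ (F \ E) = 0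

open Set Filter Topology ENNReal

section AbsolutelyMeasurable

variable {Y Z : Type*} [MeasurableSpace Y] [MeasurableSpace Z] {A : Set Y}

theorem absolutelyMeasurable_iff_nullMeasurableSet :
    AbsolutelyMeasurable A ↔ ∀ μ : Measure Y, IsFiniteMeasure μ → NullMeasurableSet A μ := by
  refine forall₂_congr fun μ _ => ⟨?_, fun h => ?_⟩
  · rintro ⟨E, F, hE, -, hEA, hAF, hnull⟩
    refine ⟨E, hE, EventuallyLE.antisymm ?_ hEA.eventuallyLE⟩
    exact ae_le_set.2 (measure_mono_null (sdiff_subset_sdiff_left hAF) hnull)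
  · obtain ⟨E, hEA, hE, hEA_ae⟩ := h.exists_measurable_subset_ae_eq
    obtain ⟨F, hAF, hF, hFA_ae⟩ := h.exists_measurable_superset_ae_eq
    exact ⟨E, F, hE, hF, hEA, hAF, ae_le_set.1 (hFA_ae.le.trans hEA_ae.symm.le)⟩

theorem MeasurableSet.absolutelyMeasurable (hA : MeasurableSet A) : AbsolutelyMeasurable A :=
  fun _ _ => ⟨A, A, hA, hA, subset_rfl, subset_rfl, by simp⟩

theorem AbsolutelyMeasurable.compl (hA : AbsolutelyMeasurable A) : AbsolutelyMeasurable Aᶜ := by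
  simp only [absolutelyMeasurable_iff_nullMeasurableSet] at hA ⊢
  exact fun μ hμ => (hA μ hμ).compl

theorem AbsolutelyMeasurable.iUnion {A : ℕ → Set Y} (hA : ∀ n, AbsolutelyMeasurable (A n)) :
    AbsolutelyMeasurable (⋃ n, A n) := by
  simp only [absolutelyMeasurable_iff_nullMeasurableSet] at hA ⊢
  exact fun μ hμ => .iUnion fun n => hA n μ hμ

theorem AbsolutelyMeasurable.preimage {A : Set Z} (hA : AbsolutelyMeasurable A) {f : Y → Z}
    (hf : Measurable f) : AbsolutelyMeasurable (f ⁻¹' A) := by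
  simp only [absolutelyMeasurable_iff_nullMeasurableSet] at hA ⊢
  exact fun μ _ => (hA _ inferInstance).preimage (hf.quasiMeasurePreserving μ)

end AbsolutelyMeasurable

theorem Monotone.exists_measure_iUnion_le_add {α : Type*} [MeasurableSpace α] {μ : Measure α}
    {s : ℕ → Set α} (hs : Monotone s) (hfin : μ (⋃ n, s n) ≠ ∞) {ε : ℝ≥0∞} (hε : ε ≠ 0) :
    ∃ n, μ (⋃ n, s n) ≤ μ (s n) + ε := by
  obtain ⟨n, hn, -⟩ := ((ENNReal.tendsto_nhds hfin).1 (tendsto_measure_iUnion_atTop hs) ε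
    (pos_iff_ne_zero.2 hε)).exists
  exact ⟨n, tsub_le_iff_right.1 hn⟩

theorem exists_measure_image_le_measure_image_sep_add {α : Type*} [MeasurableSpace α]
    (μ : Measure α) [IsFiniteMeasure μ] (φ : (ℕ → ℕ) → α) (W : Set (ℕ → ℕ)) (k : ℕ)
    {ε : ℝ≥0∞} (hε : ε ≠ 0) : ∃ n, μ (φ '' W) ≤ μ (φ '' {x ∈ W | x k ≤ n}) + ε := by
  have hW : ⋃ n, φ '' {x ∈ W | x k ≤ n} = φ '' W := by
    rw [← image_iUnion]
    congr 1
    ext x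
    simpa using fun _ => ⟨x k, le_rfl⟩
  have h_mono : Monotone fun n => φ '' {x ∈ W | x k ≤ n} := fun m n h =>
    image_mono fun x hx => ⟨hx.1, hx.2.trans h⟩
  simpa only [hW] using h_mono.exists_measure_iUnion_le_add (measure_ne_top _ _) hε

section BaireSpace

variable {α : Type*} [TopologicalSpace α] [T2Space α] [FirstCountableTopology α]

theorem isCompact_Iic_nat_nat (b : ℕ → ℕ) : IsCompact (Iic b) := by
  rw [← pi_univ_Iic]
  exact isCompact_univ_pi fun i => (finite_Iic _).isCompact

theorem iInter_closure_image_subset_image_Iic {φ : (ℕ → ℕ) → α} (hφ : Continuous φ)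
    (b : ℕ → ℕ) : ⋂ k, closure (φ '' {x | ∀ i < k, x i ≤ b i}) ⊆ φ '' Iic b := by
  intro c hc
  obtain ⟨U, hU⟩ := (𝓝 c).exists_antitone_basis
  have h_approx : ∀ k, ∃ x : ℕ → ℕ, (∀ i < k, x i ≤ b i) ∧ φ x ∈ U k := fun k => by
    obtain ⟨_, hxU, x, hx, rfl⟩ := mem_closure_iff_nhds.1 (mem_iInter.1 hc k) (U k) (hU.mem k)
    exact ⟨x, hx, hxU⟩
  choose x hxb hxU using h_approx
  -- truncating at `b` lands in a compact set without changing any coordinate below `k`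
  obtain ⟨a, ha, r, hr, hlim⟩ :=
    (isCompact_Iic_nat_nat b).tendsto_subseq fun k => (inf_le_right : x k ⊓ b ≤ b)
  have hxa : Tendsto (x ∘ r) atTop (𝓝 a) := by
    refine tendsto_pi_nhds.2 fun i => (tendsto_pi_nhds.1 hlim i).congr' ?_
    filter_upwards [eventually_gt_atTop i] with k hk
    exact inf_eq_left.2 (hxb (r k) i (hk.trans_le hr.le_apply))
  have hφc : Tendsto (φ ∘ x ∘ r) atTop (𝓝 c) :=
    hU.tendsto fun k => hU.antitone hr.le_apply (hxU (r k))
  exact ⟨a, ha, tendsto_nhds_unique ((hφ.tendsto a).comp hxa) hφc⟩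

end BaireSpace

section InnerRegularity

variable {α : Type*} [TopologicalSpace α] [T2Space α] [FirstCountableTopology α]
  [MeasurableSpace α] [OpensMeasurableSpace α]

theorem exists_isCompact_subset_range_measure_le_add {φ : (ℕ → ℕ) → α} (hφ : Continuous φ)
    (μ : Measure α) [IsFiniteMeasure μ] {ε : ℝ≥0∞} (hε : ε ≠ 0) :
    ∃ K, IsCompact K ∧ K ⊆ range φ ∧ μ (range φ) ≤ μ K + ε := by
  obtain ⟨δ, hδ, hδε⟩ := ENNReal.exists_pos_sum_of_countable hε ℕ
  choose bound h_bound using fun W k =>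
    exists_measure_image_le_measure_image_sep_add μ φ W k (ENNReal.coe_ne_zero.2 (hδ k).ne')
  -- bound the coordinates one at a time, losing at most `δ k` of measure at step `k`
  let V : ℕ → Set (ℕ → ℕ) := fun k => Nat.rec univ (fun k W => {x ∈ W | x k ≤ bound W k}) k
  let b k := bound (V k) k
  have hV_anti : Antitone V := antitone_nat_of_succ_le fun k x hx => hx.1
  have hV_sub : ∀ k, V k ⊆ {x | ∀ i < k, x i ≤ b i} := by
    intro k
    induction k with
    | zero => simp
    | succ k ih =>
      intro x hx i hi
      rcases Nat.lt_succ_iff_lt_or_eq.1 hi with hi | rfl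
      · exact ih hx.1 i hi
      · exact hx.2
  have hμV : ∀ k, μ (range φ) ≤ μ (φ '' V k) + ∑ j ∈ Finset.range k, (δ j : ℝ≥0∞) := by
    intro k
    induction k with
    | zero => simp [V]
    | succ k ih =>
      calc μ (range φ) ≤ μ (φ '' V k) + ∑ j ∈ Finset.range k, (δ j : ℝ≥0∞) := ih
        _ ≤ μ (φ '' V (k + 1)) + δ k + ∑ j ∈ Finset.range k, (δ j : ℝ≥0∞) := by
          gcongr; exact h_bound (V k) k
        _ = μ (φ '' V (k + 1)) + ∑ j ∈ Finset.range (k + 1), (δ j : ℝ≥0∞) := by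
          rw [Finset.sum_range_succ]; ring
  have h_closure : μ (range φ) ≤ μ (⋂ k, closure (φ '' V k)) + ε := by
    rw [Antitone.measure_iInter (fun m n h => closure_mono (image_mono (hV_anti h)))
      (fun k => isClosed_closure.nullMeasurableSet) ⟨0, measure_ne_top _ _⟩, ENNReal.iInf_add]
    refine le_iInf fun k => (hμV k).trans (add_le_add (measure_mono subset_closure) ?_)
    exact (ENNReal.sum_le_tsum _).trans hδε.le
  refine ⟨φ '' Iic b, (isCompact_Iic_nat_nat b).image hφ, image_subset_range _ _,
    h_closure.trans (add_le_add_left (measure_mono ?_) _)⟩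
  exact (iInter_mono fun k => closure_mono (image_mono (hV_sub k))).trans
    (iInter_closure_image_subset_image_Iic hφ b)


theorem AnalyticSet.absolutelyMeasurable {A : Set α} (hA : AnalyticSet A) :
    AbsolutelyMeasurable A := by
  rw [absolutelyMeasurable_iff_nullMeasurableSet]
  intro μ _
  rw [AnalyticSet_def] at hA
  rcases hA with rfl | ⟨φ, hφ, rfl⟩
  · exact nullMeasurableSet_empty
  choose K hK hKφ hμK using fun n : ℕ =>
    exists_isCompact_subset_range_measure_le_add hφ μ (ENNReal.inv_ne_zero.2 (natCast_ne_top n))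
  have hK_meas : MeasurableSet (⋃ n, K n) := .iUnion fun n => (hK n).isClosed.measurableSet
  have hμ_le : μ (range φ) ≤ μ (⋃ n, K n) := by
    refine ge_of_tendsto' (by simpa using tendsto_const_nhds.add ENNReal.tendsto_inv_nat_nhds_zero)
      fun n => (hμK n).trans (add_le_add_left (measure_mono (subset_iUnion K n)) _)
  exact hK_meas.nullMeasurableSet.congr
    (ae_eq_of_subset_of_measure_ge (iUnion_subset hKφ) hμ_le hK_meas.nullMeasurableSet
      (measure_ne_top _ _))

theorem AbsolutelyMeasurable.of_measurableSet_generateFrom_analyticSet {A : Set α}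
    (hA : MeasurableSet[MeasurableSpace.generateFrom {s | AnalyticSet s}] A) :
    AbsolutelyMeasurable A := by
  induction hA with
  | basic s hs => exact AnalyticSet.absolutelyMeasurable hs
  | empty => exact MeasurableSet.empty.absolutelyMeasurable
  | compl s _ ih => exact ih.compl
  | iUnion s _ ih => exact .iUnion ih

end InnerRegularity

theorem measurable_nat_sInf {C : Type*} [MeasurableSpace C] {S : C → Set ℕ}
    (hS : ∀ n, MeasurableSet {c | n ∈ S c}) : Measurable fun c => sInf (S c) := by
  refine measurable_to_countable' fun m => ?_
  have h_eq : (fun c => sInf (S c)) ⁻¹' {m} =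
      ({c | m ∈ S c} ∩ ⋂ k < m, {c | k ∉ S c}) ∪ ((⋂ n, {c | n ∉ S c}) ∩ {_c | m = 0}) := by
    ext c
    rcases (S c).eq_empty_or_nonempty with hc | hc
    · simp [hc, eq_comm]
    · have : ¬ ∀ n, n ∉ S c := fun h => hc.ne_empty (eq_empty_of_forall_notMem h)
      simp only [mem_preimage, mem_singleton_iff, mem_union, mem_inter_iff, mem_ofPred_eq,
        mem_iInter, this, false_and, or_false]
      constructor
      · rintro rfl
        exact ⟨Nat.sInf_mem hc, fun k hk => Nat.notMem_of_lt_sInf hk⟩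
      · rintro ⟨hm, hlt⟩
        exact le_antisymm (Nat.sInf_le hm) (not_lt.1 fun h => hlt _ h (Nat.sInf_mem hc))
  rw [h_eq]
  exact ((hS m).inter (.biInter (to_countable _) fun k _ => (hS k).compl)).union
    ((MeasurableSet.iInter fun n => (hS n).compl).inter (.const _))

section LexMin

noncomputable def lexMinStage (K : Set (ℕ → ℕ)) : ℕ → Set (ℕ → ℕ)
  | 0 => K
  | k + 1 => {a ∈ lexMinStage K k | a k = sInf ((· k) '' lexMinStage K k)}

/-- The lexicographically least element of `K` when `K` is closed and nonempty
(and `0` when `K` is empty). -/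
noncomputable def lexMin (K : Set (ℕ → ℕ)) (k : ℕ) : ℕ :=
  sInf ((· k) '' lexMinStage K k)

variable {K : Set (ℕ → ℕ)}

theorem mem_lexMinStage_iff {k : ℕ} {a : ℕ → ℕ} :
    a ∈ lexMinStage K k ↔ a ∈ K ∧ ∀ i < k, a i = lexMin K i := by
  induction k with
  | zero => simp [lexMinStage]
  | succ k ih =>
    simp only [lexMinStage, mem_ofPred_eq, ih, Nat.lt_succ_iff_lt_or_eq, or_imp, forall_and,
      forall_eq, and_assoc]
    rfl

theorem lexMinStage_nonempty (hK : K.Nonempty) (k : ℕ) : (lexMinStage K k).Nonempty := by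
  induction k with
  | zero => exact hK
  | succ k ih =>
    obtain ⟨a, ha, hak⟩ := Nat.sInf_mem (ih.image (· k))
    exact ⟨a, ha, hak⟩

theorem IsClosed.lexMin_mem (hK : IsClosed K) (hne : K.Nonempty) : lexMin K ∈ K := by
  choose a ha using lexMinStage_nonempty hne
  -- `a k` agrees with `lexMin K` below `k`, so it converges to `lexMin K`
  have h_lim : Tendsto a atTop (𝓝 (lexMin K)) := by
    refine tendsto_pi_nhds.2 fun i => tendsto_const_nhds.congr' ?_
    filter_upwards [eventually_gt_atTop i] with k hk
    exact ((mem_lexMinStage_iff.1 (ha k)).2 i hk).symm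
  exact hK.mem_of_tendsto h_lim (.of_forall fun k => (mem_lexMinStage_iff.1 (ha k)).1)

theorem measurable_lexMin {C : Type*} [MeasurableSpace C] {F : C → Set (ℕ → ℕ)}
    (hF : ∀ s, IsClosed s → MeasurableSet {c | (F c ∩ s).Nonempty}) :
    Measurable fun c => lexMin (F c) := by
  refine measurable_pi_iff.2 fun k => ?_
  induction k using Nat.strong_induction_on with
  | _ k ih =>
  have h_prefix : Measurable fun c (i : Fin k) => lexMin (F c) i :=
    measurable_pi_lambda _ fun i => ih i i.2
  refine measurable_nat_sInf fun n => ?_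
  have h_eq : {c | n ∈ (· k) '' lexMinStage (F c) k} = ⋃ v : Fin k → ℕ,
      (fun c (i : Fin k) => lexMin (F c) i) ⁻¹' {v} ∩
        {c | (F c ∩ ({a | ∀ i : Fin k, a i = v i} ∩ {a | a k = n})).Nonempty} := by
    ext c
    simp only [mem_ofPred_eq, mem_image, mem_lexMinStage_iff, mem_iUnion, mem_inter_iff,
      mem_preimage, mem_singleton_iff]
    constructor
    · rintro ⟨a, ⟨haF, ha⟩, rfl⟩
      exact ⟨_, rfl, a, haF, fun i => ha i i.2, rfl⟩
    · rintro ⟨v, rfl, a, haF, ha, rfl⟩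
      exact ⟨a, ⟨haF, fun i hi => ha ⟨i, hi⟩⟩, rfl⟩
  rw [h_eq]
  refine .iUnion fun v => (h_prefix (measurableSet_singleton v)).inter (hF _ ?_)
  simp only [ofPred_forall]
  exact (isClosed_iInter fun i => isClosed_eq (continuous_apply _) continuous_const).inter
    (isClosed_eq (continuous_apply k) continuous_const)

end LexMin

theorem absolutelyMeasurable_preimage_lexMin_fiber {C : Type*} [TopologicalSpace C] [T2Space C]
    [FirstCountableTopology C] [MeasurableSpace C] [OpensMeasurableSpace C]
    {π : (ℕ → ℕ) → C} (hπ : Continuous π) {S : Set (ℕ → ℕ)} (hS : MeasurableSet S) :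
    AbsolutelyMeasurable ((fun c => lexMin (π ⁻¹' {c})) ⁻¹' S) := by
  refine .of_measurableSet_generateFrom_analyticSet
    (@measurable_lexMin _ (.generateFrom {s | AnalyticSet s}) _ (fun s hs => ?_) S hS)
  refine MeasurableSpace.measurableSet_generateFrom ?_
  have : {c | (π ⁻¹' {c} ∩ s).Nonempty} = π '' s := by
    ext c; simp [Set.Nonempty, and_comm]
  exact this ▸ hs.analyticSet.image_of_continuous hπ

/-- Every surjective Borel map from a standard Borel space onto a countably
separated measurable space admits an absolutely measurable cross section. -/
theorem exists_absolutelyMeasurable_section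
    (X Y : Type*) [MeasurableSpace X] [StandardBorelSpace X] [MeasurableSpace Y]
    (hsep : ∃ c : ℕ → Set Y, (∀ n, MeasurableSet (c n)) ∧
      ∀ y z : Y, (∀ n, y ∈ c n ↔ z ∈ c n) → y = z)
    (f : X → Y) (hf : Measurable f) (hsurj : Function.Surjective f) :
    ∃ g : Y → X, (∀ y, f (g y) = y) ∧
      ∀ E : Set X, MeasurableSet E → AbsolutelyMeasurable (g ⁻¹' E) := by
  rcases isEmpty_or_nonempty X with hX | hX
  · have : IsEmpty Y := hsurj.isEmpty
    exact ⟨isEmptyElim, isEmptyElim, fun E _ => Subsingleton.measurableSet.absolutelyMeasurable⟩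
  obtain ⟨c, hc, hc_sep⟩ := hsep
  have : MeasurableSpace.CountablySeparated Y :=
    ⟨⟨range c, countable_range c, forall_mem_range.2 hc,
      fun y _ z _ h => hc_sep y z fun n => h _ (mem_range_self n)⟩⟩
  obtain ⟨i, hi, hi_inj⟩ := MeasurableSpace.measurable_injection_nat_bool_of_countablySeparated Y
  let := upgradeStandardBorel X
  obtain ⟨τ, hτ, hτ_cont, hτ_polish⟩ := (hi.comp hf).exists_continuous
  obtain ⟨φ, hφ, hφ_surj⟩ := @PolishSpace.exists_nat_nat_continuous_surjective X τ hτ_polish hX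
  have hπ : Continuous (i ∘ f ∘ φ) := hτ_cont.comp hφ
  refine ⟨fun y => φ (lexMin ((i ∘ f ∘ φ) ⁻¹' {i y})), fun y => hi_inj ?_, fun E hE => ?_⟩
  · obtain ⟨x, rfl⟩ := hsurj y
    obtain ⟨a, rfl⟩ := hφ_surj x
    exact (isClosed_singleton.preimage hπ).lexMin_mem ⟨a, rfl⟩
  · have hφ_meas : Measurable φ := hφ.borel_measurable.mono BorelSpace.measurable_eq.ge
      (BorelSpace.measurable_eq.trans_le (borel_anti hτ))
    exact (absolutelyMeasurable_preimage_lexMin_fiber hπ (hφ_meas hE)).preimage hi
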